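/- For every integer k ≥ 1, the squared L² norm of the k-fold standard heat kernel over the simplex equals ∫_{Δ_k} ∫_{ℝ^k} ϱ_k(t,x)² dx dt = 1 / (2^k · Γ(k/2 + 1)), where Γ is the Gamma function. -/

import Mathlib

open MeasureTheory Real

/-- Standard heat kernel `ϱ(t,x,y) = (1/√(2πt)) exp(-(y-x)²/(2t))`. -/
noncomputable def heatKernel (t x y : ℝ) : ℝ :=
  (1 / Real.sqrt (2 * π * t)) * Real.exp (-(y - x) ^ 2 / (2 * t))

/-- The previous coordinate, with the convention that the `0`-th predecessor is `0`:
`prev v j = v (j-1)` for `j ≥ 1` and `prev v 0 = 0`. -/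
def prev {k : ℕ} (v : Fin k → ℝ) (j : Fin k) : ℝ :=
  if h : (j : ℕ) = 0 then 0 else v ⟨(j : ℕ) - 1, by have := j.isLt; omega⟩

/-- The open simplex `Δ_k = {t : 0 < t₁ < t₂ < ⋯ < t_k ≤ 1}`. -/
def simplex (k : ℕ) : Set (Fin k → ℝ) :=
  {t | StrictMono t ∧ ∀ j, t j ∈ Set.Ioc (0 : ℝ) 1}

/-- The `k`-fold standard heat kernel `ϱ_k(t,x) = ∏_{j=1}^k ϱ(t_j - t_{j-1}, x_{j-1}, x_j)`,
with the conventions `t₀ = 0`, `x₀ = 0`. -/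
noncomputable def heatKernelFold {k : ℕ} (t x : Fin k → ℝ) : ℝ :=
  ∏ j : Fin k, heatKernel (t j - prev t j) (prev x j) (x j)

/-!
Squaring the heat kernel gives Gaussians, so after the volume-preserving change of variables
`x ↦ (x_j - x_{j-1})_j` the `x`-integral factorises:
`∫ ϱ_k(t,x)² dx = ∏_j (4π(t_j - t_{j-1}))^{-1/2}`.
The same change of variables in `t` turns the simplex into `{s > 0, ∑ s_j ≤ 1}`, and the
substitution `s_j = y_j²`, which pushes Lebesgue measure forward to the density `s^{-1/2}`,
turns `∫_{s > 0, ∑ s_j ≤ 1} ∏_j s_j^{-1/2} ds` into the volume `π^{k/2} / Γ(k/2 + 1)`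
of the unit ball.
-/

open scoped ENNReal

namespace MeasureTheory

theorem lintegral_fin_prod {n : ℕ} {X : Type*} [MeasurableSpace X]
    (μ : Fin n → Measure X) [∀ i, SigmaFinite (μ i)] {f : Fin n → X → ℝ≥0∞}
    (hf : ∀ i, Measurable (f i)) :
    ∫⁻ x, ∏ i, f i (x i) ∂Measure.pi μ = ∏ i, ∫⁻ x, f i x ∂μ i := by
  induction n with
  | zero => simp
  | succ n ih =>
    rw [← ((measurePreserving_piFinSuccAbove μ 0).symm).lintegral_comp_emb
      (MeasurableEquiv.measurableEmbedding _)]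
    simp_rw [MeasurableEquiv.piFinSuccAbove_symm_apply, Fin.insertNthEquiv,
      Fin.prod_univ_succ, Fin.insertNth_zero, Equiv.coe_fn_mk, Fin.cons_succ,
      Fin.zero_succAbove, cast_eq, Fin.cons_zero]
    rw [lintegral_prod_mul (g := fun y : Fin n → X => ∏ i : Fin n, f i.succ (y i))
      (hf 0).aemeasurable
      (Finset.measurable_prod _ fun i _ => (hf _).comp (measurable_pi_apply i)).aemeasurable,
      ih _ fun i => hf i.succ]

theorem lintegral_fintype_prod {ι : Type*} [Fintype ι] {X : Type*}
    [MeasurableSpace X] (μ : ι → Measure X) [∀ i, SigmaFinite (μ i)]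
    {f : ι → X → ℝ≥0∞} (hf : ∀ i, Measurable (f i)) :
    ∫⁻ x, ∏ i, f i (x i) ∂Measure.pi μ = ∏ i, ∫⁻ x, f i x ∂μ i := by
  let e := (Fintype.equivFin ι).symm
  rw [← (measurePreserving_piCongrLeft μ e).lintegral_comp_emb
    (MeasurableEquiv.measurableEmbedding _)]
  simp_rw [← e.prod_comp, MeasurableEquiv.coe_piCongrLeft, Equiv.piCongrLeft_apply_apply]
  exact lintegral_fin_prod _ fun i => hf (e i)

theorem Measure.pi_withDensity {ι : Type*} [Fintype ι] {X : Type*} [MeasurableSpace X]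
    (μ : ι → Measure X) [∀ i, SigmaFinite (μ i)] {f : ι → X → ℝ≥0∞}
    (hf : ∀ i, Measurable (f i)) [∀ i, SigmaFinite ((μ i).withDensity (f i))] :
    Measure.pi (fun i => (μ i).withDensity (f i)) =
      (Measure.pi μ).withDensity fun x => ∏ i, f i (x i) := by
  refine Measure.pi_eq fun s hs => ?_
  rw [withDensity_apply _ (MeasurableSet.univ_pi hs), Measure.restrict_pi_pi,
    lintegral_fintype_prod _ hf]
  exact Finset.prod_congr rfl fun i _ => (withDensity_apply _ (hs i)).symm

open Set in
theorem setLIntegral_comp_sq_eq_of_image {H : Set ℝ} (hH : MeasurableSet H)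
    (hH0 : ∀ x ∈ H, x ≠ 0) (hinj : InjOn (· ^ 2) H) (himg : (· ^ 2) '' H = Ioi 0)
    (g : ℝ → ℝ≥0∞) :
    ∫⁻ x in H, g (x ^ 2) = ∫⁻ s in Ioi 0, ENNReal.ofReal (2 * √s)⁻¹ * g s := by
  rw [← himg, lintegral_image_eq_lintegral_abs_deriv_mul hH
    (fun x _ => (hasDerivAt_pow 2 x).hasDerivWithinAt) hinj]
  refine setLIntegral_congr_fun hH fun x hx => ?_
  have hx0 : 0 < |x| := abs_pos.2 (hH0 x hx)
  have hderiv : |((2 : ℕ) : ℝ) * x ^ (2 - 1)| = 2 * |x| := by simp [abs_mul]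
  rw [hderiv, sqrt_sq_eq_abs, ← mul_assoc, ← ENNReal.ofReal_mul (by positivity),
    mul_inv_cancel₀ (by positivity), ENNReal.ofReal_one, one_mul]

open Set in
/-- Here `(√s)⁻¹ = 0` for `s ≤ 0` (junk values of `√` and `⁻¹`), so only `s > 0`
contributes. -/
theorem lintegral_comp_sq (g : ℝ → ℝ≥0∞) :
    ∫⁻ x, g (x ^ 2) = ∫⁻ s, ENNReal.ofReal (√s)⁻¹ * g s := by
  have hneg := setLIntegral_comp_sq_eq_of_image measurableSet_Iio (fun x hx => hx.ne)
    (fun x hx y hy h => by nlinarith [mem_Iio.1 hx, mem_Iio.1 hy])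
    (Set.ext fun y =>
      ⟨(by rintro ⟨x, hx, rfl⟩; exact mem_Ioi.2 (by nlinarith [mem_Iio.1 hx])),
      fun hy => ⟨-√y, neg_neg_of_pos (sqrt_pos.2 hy), by simp [sq_sqrt hy.le]⟩⟩) g
  have hpos := setLIntegral_comp_sq_eq_of_image measurableSet_Ioi (fun x hx => hx.ne')
    (fun x hx y hy h => by nlinarith [mem_Ioi.1 hx, mem_Ioi.1 hy])
    (Set.ext fun y => ⟨(by rintro ⟨x, hx, rfl⟩; exact pow_pos (mem_Ioi.1 hx) 2),
      fun hy => ⟨√y, sqrt_pos.2 hy, sq_sqrt hy.le⟩⟩) g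
  have hsupp : (fun s => ENNReal.ofReal (√s)⁻¹ * g s).support ⊆ Ioi 0 := fun s hs => by
    by_contra h
    simp [sqrt_eq_zero'.2 (not_lt.1 h)] at hs
  rw [← lintegral_add_compl _ measurableSet_Ioi, compl_Ioi, setLIntegral_congr Iio_ae_eq_Iic.symm,
    hneg, hpos, ← two_mul, ← lintegral_const_mul' _ _ ENNReal.ofNat_ne_top,
    ← setLIntegral_eq_of_support_subset hsupp]
  refine setLIntegral_congr_fun measurableSet_Ioi fun s hs => ?_
  rw [← mul_assoc, ← ENNReal.ofReal_ofNat, ← ENNReal.ofReal_mul zero_le_two]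
  congr 2
  field_simp

theorem map_sq_volume :
    Measure.map (fun x : ℝ => x ^ 2) volume =
      volume.withDensity fun s => ENNReal.ofReal (√s)⁻¹ := by
  refine Measure.ext_of_lintegral _ fun g hg => ?_
  rw [lintegral_map hg (by fun_prop),
    lintegral_withDensity_eq_lintegral_mul _ (by fun_prop) hg]
  exact lintegral_comp_sq g

theorem map_sq_volume_pi (ι : Type*) [Fintype ι] :
    Measure.map (fun (x : ι → ℝ) i => x i ^ 2) volume =
      volume.withDensity fun s => ∏ i, ENNReal.ofReal (√(s i))⁻¹ := by
  have : SigmaFinite (Measure.map (fun x : ℝ => x ^ 2) volume) := map_sq_volume ▸ inferInstance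
  rw [volume_pi, Measure.pi_map_pi (f := fun _ (x : ℝ) => x ^ 2) fun _ => by fun_prop,
    map_sq_volume, Measure.pi_withDensity _ fun _ => by fun_prop]

theorem setLIntegral_sum_le_one_prod_inv_sqrt (ι : Type*) [Fintype ι] :
    ∫⁻ s in {s : ι → ℝ | ∑ i, s i ≤ 1}, ∏ i, ENNReal.ofReal (√(s i))⁻¹ =
      volume {x : ι → ℝ | ∑ i, x i ^ 2 ≤ 1} := by
  have hmeas : MeasurableSet {s : ι → ℝ | ∑ i, s i ≤ 1} :=
    measurableSet_le (by fun_prop) measurable_const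
  rw [← withDensity_apply _ hmeas, ← map_sq_volume_pi, Measure.map_apply (by fun_prop) hmeas]
  rfl

theorem volume_sum_sq_le_one (ι : Type*) [Fintype ι] [Nonempty ι] :
    volume {x : ι → ℝ | ∑ i, x i ^ 2 ≤ 1} =
      ENNReal.ofReal (√π ^ Fintype.card ι / Gamma (Fintype.card ι / 2 + 1)) := by
  have hball : {x : ι → ℝ | ∑ i, x i ^ 2 ≤ 1} =
      {x : ι → ℝ | (∑ i, |x i| ^ (2 : ℝ)) ^ (1 / 2 : ℝ) ≤ 1} := by
    ext x
    simp only [Set.mem_ofPred_eq, Real.rpow_two, sq_abs, ← sqrt_eq_rpow, sqrt_le_one]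
  have hΓ : 2 * Gamma (1 / 2 + 1) = √π := by
    rw [Gamma_add_one one_half_pos.ne', Gamma_one_half_eq]
    ring
  rw [hball, volume_sum_rpow_le ι one_le_two 1, ENNReal.ofReal_one, one_pow, one_mul, hΓ]

theorem setIntegral_pos_sum_le_one_prod_inv_sqrt (ι : Type*) [Fintype ι] [Nonempty ι] :
    ∫ s in {s : ι → ℝ | (∀ i, 0 < s i) ∧ ∑ i, s i ≤ 1}, ∏ i, (√(s i))⁻¹ =
      √π ^ Fintype.card ι / Gamma (Fintype.card ι / 2 + 1) := by
  have hB : MeasurableSet {s : ι → ℝ | ∑ i, s i ≤ 1} :=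
    measurableSet_le (by fun_prop) measurable_const
  have hvanish (s : ι → ℝ) (hs : s ∈ {s : ι → ℝ | ∑ i, s i ≤ 1} \
      {s : ι → ℝ | (∀ i, 0 < s i) ∧ ∑ i, s i ≤ 1}) : ∏ i, (√(s i))⁻¹ = 0 := by
    obtain ⟨i, hi⟩ : ∃ i, s i ≤ 0 := by
      by_contra! h
      exact hs.2 ⟨h, hs.1⟩
    exact Finset.prod_eq_zero (Finset.mem_univ i) (by simp [sqrt_eq_zero'.2 hi])
  rw [← setIntegral_eq_of_subset_of_forall_sdiff_eq_zero hB (fun s hs => hs.2) hvanish,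
    integral_eq_lintegral_of_nonneg_ae (ae_of_all _ fun s => by positivity)
      (by fun_prop : Measurable fun s : ι → ℝ => ∏ i, (√(s i))⁻¹).aestronglyMeasurable]
  simp_rw [ENNReal.ofReal_prod_of_nonneg fun i _ => inv_nonneg.2 (sqrt_nonneg _)]
  rw [setLIntegral_sum_le_one_prod_inv_sqrt, volume_sum_sq_le_one,
    ENNReal.toReal_ofReal (by positivity)]

end MeasureTheory

lemma prev_zero {k : ℕ} (v : Fin (k + 1) → ℝ) : prev v 0 = 0 := dif_pos rfl

lemma prev_succ {k : ℕ} (v : Fin (k + 1) → ℝ) (j : Fin k) : prev v j.succ = v j.castSucc :=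
  dif_neg (by simp)

lemma prev_castSucc {k : ℕ} (v : Fin (k + 1) → ℝ) (j : Fin k) :
    prev v j.castSucc = prev (v ∘ Fin.castSucc) j := rfl

lemma prev_add {k : ℕ} (x y : Fin k → ℝ) (j : Fin k) :
    prev (x + y) j = prev x j + prev y j := by
  unfold prev; split_ifs <;> simp

lemma prev_smul {k : ℕ} (c : ℝ) (x : Fin k → ℝ) (j : Fin k) :
    prev (c • x) j = c * prev x j := by
  unfold prev; split_ifs <;> simp

def increments (k : ℕ) : (Fin k → ℝ) →ₗ[ℝ] (Fin k → ℝ) where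
  toFun x j := x j - prev x j
  map_add' x y := by ext j; simp only [prev_add, Pi.add_apply]; ring
  map_smul' c x := by
    ext j
    simp only [prev_smul, Pi.smul_apply, smul_eq_mul, RingHom.id_apply]
    ring

lemma increments_apply {k : ℕ} (x : Fin k → ℝ) (j : Fin k) :
    increments k x j = x j - prev x j := rfl

lemma det_increments (k : ℕ) : LinearMap.det (increments k) = 1 := by
  rw [← LinearMap.det_toMatrix', Matrix.det_of_isLowerTriangular]
  · refine Finset.prod_eq_one fun j _ => ?_
    simp [LinearMap.toMatrix'_apply, increments_apply, prev, Pi.single_apply, Fin.ext_iff]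
    omega
  · intro i j (hij : i < j)
    simp only [LinearMap.toMatrix'_apply, increments_apply, prev, Pi.single_apply, Fin.ext_iff]
    have := Fin.lt_def.mp hij
    split_ifs <;> (try simp) <;> omega

lemma measurePreserving_increments (k : ℕ) : MeasurePreserving (increments k) := by
  refine ⟨(increments k).continuous_of_finiteDimensional.measurable, ?_⟩
  rw [Measure.map_linearMap_addHaar_eq_smul_addHaar _ (by simp [det_increments]),
    det_increments]
  simp

lemma measurableEmbedding_increments (k : ℕ) : MeasurableEmbedding (increments k) :=
  ((increments k).equivOfDetNeZero (by simp [det_increments])).toContinuousLinearEquiv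
    |>.toHomeomorph.measurableEmbedding

lemma sum_increments {k : ℕ} (t : Fin (k + 1) → ℝ) :
    ∑ j, increments (k + 1) t j = t (Fin.last k) := by
  induction k with
  | zero => simp [increments_apply, prev_zero]
  | succ k ih =>
    have ih' := ih (t ∘ Fin.castSucc)
    simp only [increments_apply, Function.comp_apply] at ih'
    rw [Fin.sum_univ_castSucc]
    simp only [increments_apply, prev_castSucc, ih', ← Fin.succ_last, prev_succ]
    ring

lemma increments_pos_iff {k : ℕ} (t : Fin (k + 1) → ℝ) :
    (∀ j, 0 < increments (k + 1) t j) ↔ 0 < t 0 ∧ StrictMono t := by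
  simp only [Fin.forall_fin_succ, increments_apply, prev_zero, prev_succ, sub_pos,
    Fin.strictMono_iff_lt_succ]

lemma simplex_eq_preimage_increments (k : ℕ) :
    simplex (k + 1) = increments (k + 1) ⁻¹' {s | (∀ j, 0 < s j) ∧ ∑ j, s j ≤ 1} := by
  ext t
  simp only [simplex, Set.mem_preimage, Set.mem_ofPred_eq, increments_pos_iff, sum_increments,
    Set.mem_Ioc]
  constructor
  · rintro ⟨hmono, ht⟩
    exact ⟨⟨(ht 0).1, hmono⟩, (ht _).2⟩
  · rintro ⟨⟨h0, hmono⟩, hlast⟩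
    exact ⟨hmono, fun j => ⟨h0.trans_le (hmono.monotone (Fin.zero_le j)),
      (hmono.monotone (Fin.le_last j)).trans hlast⟩⟩

lemma measurableSet_simplex (k : ℕ) : MeasurableSet (simplex k) := by
  simp only [simplex, StrictMono, Set.mem_Ioc, Set.ofPred_and, Set.ofPred_forall]
  measurability

lemma heatKernel_eq_sub (s a b : ℝ) : heatKernel s a b = heatKernel s 0 (b - a) := by
  simp [heatKernel]

lemma integral_heatKernel_sq {s : ℝ} (hs : 0 < s) :
    ∫ y, heatKernel s 0 y ^ 2 = (√(4 * π * s))⁻¹ := by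
  have hsq (y : ℝ) : heatKernel s 0 y ^ 2 = (2 * π * s)⁻¹ * exp (-s⁻¹ * y ^ 2) := by
    rw [heatKernel, mul_pow, div_pow, one_pow, sq_sqrt (by positivity), sq, ← exp_add]
    field_simp
    ring_nf
  simp_rw [hsq, integral_const_mul, integral_gaussian, div_inv_eq_mul]
  have hr : 0 < √(π * s) := by positivity
  have hr2 : √(π * s) ^ 2 = π * s := sq_sqrt (by positivity)
  rw [show 4 * π * s = (2 * √(π * s)) ^ 2 by rw [mul_pow, hr2]; ring, sqrt_sq (by positivity),
    show 2 * π * s = 2 * √(π * s) ^ 2 by rw [hr2]; ring]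
  field_simp

lemma integral_heatKernelFold_sq_eq_prod {k : ℕ} (t : Fin k → ℝ)
    (ht : ∀ j, 0 < increments k t j) :
    ∫ x, heatKernelFold t x ^ 2 = ∏ j, (√(4 * π * increments k t j))⁻¹ := by
  have hfold (x : Fin k → ℝ) : heatKernelFold t x ^ 2 =
      ∏ j, heatKernel (increments k t j) 0 (increments k x j) ^ 2 := by
    rw [heatKernelFold, ← Finset.prod_pow]
    simp only [increments_apply, heatKernel_eq_sub _ (prev x _)]
  simp_rw [hfold]
  rw [(measurePreserving_increments k).integral_comp (measurableEmbedding_increments k)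
    (fun y => ∏ j, heatKernel (increments k t j) 0 (y j) ^ 2),
    integral_fintype_prod_volume_eq_prod fun j y => heatKernel (increments k t j) 0 y ^ 2]
  exact Finset.prod_congr rfl fun j _ => integral_heatKernel_sq (ht j)

/-- The squared `L²` norm of the `k`-fold standard heat kernel over the simplex equals
`1 / (2^k Γ(k/2 + 1))`. -/
theorem integral_heatKernelFold_sq (k : ℕ) (hk : 1 ≤ k) :
    ∫ t in simplex k, ∫ x : Fin k → ℝ, (heatKernelFold t x) ^ 2 =
      1 / (2 ^ k * Real.Gamma ((k : ℝ) / 2 + 1)) := by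
  obtain ⟨m, rfl⟩ : ∃ m, k = m + 1 := ⟨k - 1, by omega⟩
  set S := {s : Fin (m + 1) → ℝ | (∀ j, 0 < s j) ∧ ∑ j, s j ≤ 1}
  have hsimplex := simplex_eq_preimage_increments m
  calc ∫ t in simplex (m + 1), ∫ x, heatKernelFold t x ^ 2
      = ∫ t in simplex (m + 1), ∏ j, (√(4 * π * increments (m + 1) t j))⁻¹ :=
        setIntegral_congr_fun (measurableSet_simplex _) fun t ht =>
          integral_heatKernelFold_sq_eq_prod t (hsimplex ▸ ht).1
    _ = ∫ s in S, ∏ j, (√(4 * π * s j))⁻¹ := by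
        rw [hsimplex]
        exact (measurePreserving_increments _).setIntegral_preimage_emb
          (measurableEmbedding_increments _) (fun s => ∏ j, (√(4 * π * s j))⁻¹) _
    _ = (2 * √π)⁻¹ ^ (m + 1) * ∫ s in S, ∏ j, (√(s j))⁻¹ := by
        have hsqrt (x : ℝ) : √(4 * π * x) = 2 * √π * √x := by
          rw [sqrt_mul (by positivity), sqrt_mul zero_le_four, show (4 : ℝ) = 2 ^ 2 by norm_num,
            sqrt_sq zero_le_two]
        simp_rw [hsqrt, mul_inv, Finset.prod_mul_distrib, Finset.prod_const, Finset.card_univ,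
          Fintype.card_fin, integral_const_mul, mul_pow]
    _ = 1 / (2 ^ (m + 1) * Gamma (((m + 1 : ℕ) : ℝ) / 2 + 1)) := by
        rw [setIntegral_pos_sum_le_one_prod_inv_sqrt, Fintype.card_fin, inv_pow, mul_pow]
        have : 0 < √π := sqrt_pos.2 pi_pos
        field_simp
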